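/- Let k ≥ 2 and let A be a family of subsets of [n] that is a strong k-wise eventown but not a (k+1)-wise eventown. Then |A| ≤ 2^(⌊n/2⌋ − (2^k − k − 2)). -/

import Mathlib

/-!
Work in `𝔽₂^α` with the dot product, a set being its characteristic vector, so that
`charVec A ⬝ᵥ charVec C` is the parity of `|A ∩ C|`. Write the odd `(k+1)`-wise intersection as
`B₀ ∩ ⋂ t` with `t ⊆ 𝒜`, `|t| = k`. For `T ⊆ t` with `2 ≤ |T| < k` let `u_T` be the vector of `⋂ T`
and `r_T` that of `B₀ ∩ ⋂ (t \ T)`. Every intersection among members of `𝒜` and the `u_T` involves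
between one and `k` sets of `𝒜`, so `W = span 𝒜` together with the `u_T` spans an isotropic
subspace, of dimension at most `|α| / 2`. The `r_T` are orthogonal to `W`, and `r_{T₀} ⬝ᵥ u_T` is
odd exactly when `T₀ ⊆ T`, since only then all `k + 1` sets meet. This unitriangular pattern makes
the `2^k - k - 2` vectors `u_T` independent modulo `W`, and `|𝒜| ≤ 2 ^ dim W`.
-/

open Finset Module Submodule

section LinearAlgebra

variable {K V ι : Type*} [Field K] [AddCommGroup V] [Module K V]

theorem linearIndependent_of_triangular [PartialOrder ι] {u : ι → V} {f : ι → Dual K V}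
    (htri : ∀ i j, f i (u j) ≠ 0 → i ≤ j) (hdiag : ∀ i, f i (u i) ≠ 0) :
    LinearIndependent K u := by
  classical
  rw [linearIndependent_iff']
  intro s g hg
  by_contra! hsupp
  obtain ⟨i, hi, hmax⟩ := (s.filter (g · ≠ 0)).exists_maximal (by simpa [Finset.Nonempty])
  obtain ⟨his, hgi⟩ := mem_filter.1 hi
  have hcoeff : f i (∑ j ∈ s, g j • u j) = g i * f i (u i) := by
    rw [map_sum, sum_eq_single_of_mem i his]
    · simp
    intro j hj hji
    rw [map_smul, smul_eq_mul, mul_eq_zero, or_iff_not_imp_left]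
    intro hgj
    by_contra hfij
    exact hji (le_antisymm (hmax (mem_filter.2 ⟨hj, hgj⟩) (htri i j hfij)) (htri i j hfij))
  rw [hg, map_zero] at hcoeff
  exact mul_ne_zero hgi (hdiag i) hcoeff.symm

theorem finrank_sup_span_range_of_triangular [FiniteDimensional K V] [Fintype ι] [PartialOrder ι]
    (W : Submodule K V) {u : ι → V} {f : ι → Dual K V} (hW : ∀ i, ∀ w ∈ W, f i w = 0)
    (htri : ∀ i j, f i (u j) ≠ 0 → i ≤ j) (hdiag : ∀ i, f i (u i) ≠ 0) :
    finrank K ↥(W ⊔ span K (Set.range u)) = finrank K W + Fintype.card ι := by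
  have hquot : LinearIndependent K (W.mkQ ∘ u) :=
    linearIndependent_of_triangular (f := fun i => W.liftQ (f i) fun w hw => hW i w hw)
      htri hdiag
  have hdisj : W ⊓ span K (Set.range u) = ⊥ := by
    simpa [disjoint_iff, inf_comm] using range_ker_disjoint hquot
  have := finrank_sup_add_finrank_inf_eq W (span K (Set.range u))
  rw [hdisj, finrank_bot, finrank_span_eq_card (hquot.of_comp _)] at this
  omega

theorem two_mul_finrank_le_of_le_orthogonal [FiniteDimensional K V] {B : LinearMap.BilinForm K V}
    (hB : B.Nondegenerate) {U : Submodule K V} (hU : U ≤ B.orthogonal U) :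
    2 * finrank K U ≤ finrank K V := by
  have := LinearMap.BilinForm.finrank_orthogonal hB U
  have := finrank_mono hU
  have := U.finrank_le
  omega

theorem LinearMap.BilinForm.span_le_orthogonal_span {B : LinearMap.BilinForm K V} {G : Set V}
    (hG : ∀ x ∈ G, ∀ y ∈ G, B x y = 0) : span K G ≤ B.orthogonal (span K G) := by
  rw [span_le]
  intro y hy x hx
  exact (span_le (p := LinearMap.ker (B.flip y))).2 (fun z hz => hG z hz y hy) hx

theorem dotProductBilin_nondegenerate (α : Type*) [Fintype α] [DecidableEq α] :
    (dotProductBilin K K : LinearMap.BilinForm K (α → K)).Nondegenerate := by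
  refine ⟨fun x hx => ?_, fun x hx => ?_⟩ <;> ext i
  · simpa using hx (Pi.single i 1)
  · simpa using hx (Pi.single i 1)

theorem Finset.card_le_card_pow_finrank_span [Fintype K] (s : Finset V) :
    #s ≤ Fintype.card K ^ finrank K (span K (s : Set V)) := by
  have : Finite (span K (s : Set V)) := Module.finite_of_finite K
  calc #s = (s : Set V).ncard := (Set.ncard_coe_finset s).symm
    _ ≤ (span K (s : Set V) : Set V).ncard := Set.ncard_le_ncard subset_span (Set.toFinite _)
    _ = Fintype.card K ^ finrank K (span K (s : Set V)) := by
      rw [← Nat.card_coe_set_eq, SetLike.coe_sort_coe, Module.natCard_eq_pow_finrank (K := K),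
        Nat.card_eq_fintype_card]

end LinearAlgebra

theorem Finset.card_filter_two_le_card_lt_powerset {β : Type*} [DecidableEq β] (s : Finset β)
    (hs : 2 ≤ #s) : #{T ∈ s.powerset | 2 ≤ #T ∧ #T < #s} = 2 ^ #s - #s - 2 := by
  have hsplit : {T ∈ s.powerset | 2 ≤ #T ∧ #T < #s} = (Ico 2 #s).biUnion (powersetCard · s) := by
    ext T
    simp only [mem_filter, mem_powerset, mem_biUnion, mem_Ico, mem_powersetCard,
      exists_eq_right_right']
    tauto
  have hsum := Nat.sum_range_choose #s
  rw [sum_range_succ, ← sum_range_add_sum_Ico _ hs] at hsum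
  rw [hsplit, card_biUnion (fun i _ j _ hij => pairwise_disjoint_powersetCard s hij)]
  simp only [card_powersetCard]
  simp [sum_range_succ] at hsum
  omega

variable {α : Type*} [DecidableEq α]

def charVec (A : Finset α) : α → ZMod 2 := fun i => if i ∈ A then 1 else 0

theorem charVec_injective : Function.Injective (charVec (α := α)) := by
  intro A C h
  ext i
  have hi := congrFun h i
  simp only [charVec] at hi
  split_ifs at hi <;> simp_all

variable [Fintype α]

theorem charVec_dotProduct_charVec (A C : Finset α) : charVec A ⬝ᵥ charVec C = #(A ∩ C) := by
  simp [dotProduct, charVec, inter_comm]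

theorem charVec_inf_dotProduct_charVec_inf (S S' : Finset (Finset α)) :
    charVec (S.inf id) ⬝ᵥ charVec (S'.inf id) = #((S ∪ S').inf id) := by
  rw [charVec_dotProduct_charVec, inf_union, inf_eq_inter]

def IsStrongEventown (k : ℕ) (𝒜 : Finset (Finset α)) : Prop :=
  ∀ S ⊆ 𝒜, S.Nonempty → #S ≤ k → Even #(S.inf id)

namespace IsStrongEventown

variable {k : ℕ} {𝒜 t : Finset (Finset α)} {B₀ : Finset α}

theorem charVec_inf_dotProduct_eq_zero (h : IsStrongEventown k 𝒜) {S S' : Finset (Finset α)}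
    (hS : S ⊆ 𝒜) (hS' : S' ⊆ 𝒜) (hne : S.Nonempty) (hk : #(S ∪ S') ≤ k) :
    charVec (S.inf id) ⬝ᵥ charVec (S'.inf id) = 0 := by
  rw [charVec_inf_dotProduct_charVec_inf, ZMod.natCast_eq_zero_iff_even]
  exact h _ (union_subset hS hS') (hne.mono subset_union_left) hk

theorem charVec_dotProduct_charVec_inf_eq_zero (h : IsStrongEventown k 𝒜) {A : Finset α}
    (hA : A ∈ 𝒜) {T : Finset (Finset α)} (hT : T ⊆ 𝒜) (hTk : #T < k) :
    charVec A ⬝ᵥ charVec (T.inf id) = 0 := by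
  have hcard : #({A} ∪ T) ≤ k := (card_union_le _ _).trans (by rw [card_singleton]; omega)
  simpa using h.charVec_inf_dotProduct_eq_zero (singleton_subset_iff.2 hA) hT
    (singleton_nonempty A) hcard

theorem charVec_inf_insert_sdiff_dotProduct_charVec_inf (h : IsStrongEventown k 𝒜) (ht : t ⊆ 𝒜)
    (htk : #t = k) (hB₀ : B₀ ∈ 𝒜) (hodd : Odd #((insert B₀ t).inf id)) {T₀ T : Finset (Finset α)}
    (hT₀ : T₀ ⊆ t) (hT : T ⊆ t) :
    charVec ((insert B₀ (t \ T₀)).inf id) ⬝ᵥ charVec (T.inf id) = if T₀ ⊆ T then 1 else 0 := by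
  split_ifs with hsub
  · have hunion : insert B₀ (t \ T₀) ∪ T = insert B₀ t := by
      ext; simp only [mem_union, mem_insert, mem_sdiff]; grind
    rw [charVec_inf_dotProduct_charVec_inf, hunion, ZMod.natCast_eq_one_iff_odd]
    exact hodd
  · obtain ⟨x, hxT₀, hxT⟩ := not_subset.1 hsub
    have hlt : #(t \ T₀ ∪ T) < #t := card_lt_card ⟨union_subset sdiff_subset hT, fun hsub' => by
      simpa [hxT₀, hxT] using hsub' (hT₀ hxT₀)⟩
    apply h.charVec_inf_dotProduct_eq_zero (insert_subset hB₀ (sdiff_subset.trans ht))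
      (hT.trans ht) (insert_nonempty _ _)
    rw [insert_union]
    have := card_insert_le B₀ (t \ T₀ ∪ T)
    omega

theorem charVec_inf_insert_sdiff_dotProduct_charVec_eq_zero (h : IsStrongEventown k 𝒜) (ht : t ⊆ 𝒜)
    (htk : #t = k) (hB₀ : B₀ ∈ 𝒜) {T₀ : Finset (Finset α)} (hT₀ : T₀ ⊆ t) (hT₀card : 2 ≤ #T₀)
    {A : Finset α} (hA : A ∈ 𝒜) :
    charVec ((insert B₀ (t \ T₀)).inf id) ⬝ᵥ charVec A = 0 := by
  have hcard : #(insert B₀ (t \ T₀) ∪ {A}) ≤ k := by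
    have h1 := card_union_le (insert B₀ (t \ T₀)) {A}
    have h2 := card_insert_le B₀ (t \ T₀)
    have h3 := card_sdiff_of_subset hT₀
    have h4 := card_le_card hT₀
    rw [card_singleton] at h1
    omega
  simpa using h.charVec_inf_dotProduct_eq_zero (insert_subset hB₀ (sdiff_subset.trans ht))
    (singleton_subset_iff.2 hA) (insert_nonempty _ _) hcard

theorem two_mul_finrank_add_card_le (h : IsStrongEventown k 𝒜) (hk : 2 ≤ k) (ht : t ⊆ 𝒜)
    (htk : #t = k) (hB₀ : B₀ ∈ 𝒜) (hodd : Odd #((insert B₀ t).inf id)) :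
    2 * (finrank (ZMod 2) (span (ZMod 2) (𝒜.image charVec : Set (α → ZMod 2))) +
      #{T ∈ t.powerset | 2 ≤ #T ∧ #T < k}) ≤ Fintype.card α := by
  set B : LinearMap.BilinForm (ZMod 2) (α → ZMod 2) := dotProductBilin (ZMod 2) (ZMod 2)
  set W := span (ZMod 2) (𝒜.image charVec : Set (α → ZMod 2))
  set 𝒯 := {T ∈ t.powerset | 2 ≤ #T ∧ #T < k}
  have h𝒯 : ∀ T ∈ 𝒯, T ⊆ t ∧ 2 ≤ #T ∧ #T < k := fun T hT => by simpa [𝒯] using hT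
  let u : 𝒯 → α → ZMod 2 := fun T => charVec (T.1.inf id)
  let f : 𝒯 → Dual (ZMod 2) (α → ZMod 2) := fun T₀ =>
    B (charVec ((insert B₀ (t \ T₀.1)).inf id))
  have hfW : ∀ T₀, ∀ w ∈ W, f T₀ w = 0 := by
    intro T₀ w hw
    refine (span_le (p := LinearMap.ker (f T₀))).2 ?_ hw
    simp only [coe_image, Set.image_subset_iff]
    intro A hA
    exact h.charVec_inf_insert_sdiff_dotProduct_charVec_eq_zero ht htk hB₀ (h𝒯 _ T₀.2).1
      (h𝒯 _ T₀.2).2.1 hA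
  have hfu : ∀ T₀ T, f T₀ (u T) = if T₀ ≤ T then 1 else 0 := fun T₀ T =>
    h.charVec_inf_insert_sdiff_dotProduct_charVec_inf ht htk hB₀ hodd (h𝒯 _ T₀.2).1 (h𝒯 _ T.2).1
  have hdim := finrank_sup_span_range_of_triangular (u := u) W hfW
    (fun T₀ T hne => of_not_not fun hle => hne (by rw [hfu, if_neg hle]))
    (fun T => by rw [hfu, if_pos le_rfl]; exact one_ne_zero)
  have hiso : W ⊔ span (ZMod 2) (Set.range u) ≤
      B.orthogonal (W ⊔ span (ZMod 2) (Set.range u)) := by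
    rw [← span_union, coe_image]
    apply LinearMap.BilinForm.span_le_orthogonal_span
    have h𝒯𝒜 : ∀ T : 𝒯, T.1 ⊆ 𝒜 := fun T => (h𝒯 _ T.2).1.trans ht
    rintro _ (⟨A, hA, rfl⟩ | ⟨T, rfl⟩) _ (⟨A', hA', rfl⟩ | ⟨T', rfl⟩)
    · simpa [B] using h.charVec_dotProduct_charVec_inf_eq_zero (mem_coe.1 hA)
        (singleton_subset_iff.2 (mem_coe.1 hA')) (by rw [card_singleton]; omega)
    · exact h.charVec_dotProduct_charVec_inf_eq_zero hA (h𝒯𝒜 T') (h𝒯 _ T'.2).2.2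
    · rw [dotProductBilin_apply_apply, dotProduct_comm]
      exact h.charVec_dotProduct_charVec_inf_eq_zero hA' (h𝒯𝒜 T) (h𝒯 _ T.2).2.2
    · refine h.charVec_inf_dotProduct_eq_zero (h𝒯𝒜 T) (h𝒯𝒜 T') ?_ ?_
      · exact card_pos.1 (by have := (h𝒯 _ T.2).2.1; omega)
      · exact htk ▸ card_le_card (union_subset (h𝒯 _ T.2).1 (h𝒯 _ T'.2).1)
  have := two_mul_finrank_le_of_le_orthogonal (dotProductBilin_nondegenerate α) hiso
  rwa [hdim, Fintype.card_coe, finrank_fintype_fun_eq_card] at this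

theorem card_mul_two_pow_le (h : IsStrongEventown k 𝒜) (hk : 2 ≤ k) (ht : t ⊆ 𝒜)
    (htk : #t = k) (hB₀ : B₀ ∈ 𝒜) (hodd : Odd #((insert B₀ t).inf id)) :
    #𝒜 * 2 ^ (2 ^ k - k - 2) ≤ 2 ^ (Fintype.card α / 2) := by
  set d := finrank (ZMod 2) (span (ZMod 2) (𝒜.image charVec : Set (α → ZMod 2)))
  have hdim := h.two_mul_finrank_add_card_le hk ht htk hB₀ hodd
  rw [← htk, card_filter_two_le_card_lt_powerset t (htk ▸ hk), htk] at hdim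
  have hcard : #𝒜 ≤ 2 ^ d := by
    simpa [card_image_of_injective _ charVec_injective] using
      card_le_card_pow_finrank_span (K := ZMod 2) (𝒜.image charVec)
  calc #𝒜 * 2 ^ (2 ^ k - k - 2) ≤ 2 ^ d * 2 ^ (2 ^ k - k - 2) := Nat.mul_le_mul_right _ hcard
    _ = 2 ^ (d + (2 ^ k - k - 2)) := (pow_add _ _ _).symm
    _ ≤ 2 ^ (Fintype.card α / 2) := Nat.pow_le_pow_right two_pos (by omega)

end IsStrongEventown

/-- A strong k-wise eventown that is not a (k+1)-wise eventown has size at most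
2^(⌊n/2⌋ - (2^k - k - 2)). -/
theorem strong_kwise_not_succ_bound (n k : ℕ) (hk : 2 ≤ k) (𝒜 : Finset (Finset (Fin n)))
    (hstrong : ∀ k', 1 ≤ k' → k' ≤ k → ∀ S : Finset (Finset (Fin n)), S ⊆ 𝒜 →
      S.card = k' → Even (S.inf id).card)
    (hnot : ∃ S : Finset (Finset (Fin n)), S ⊆ 𝒜 ∧ S.card = k + 1 ∧ Odd (S.inf id).card) :
    𝒜.card * 2 ^ (2 ^ k - k - 2) ≤ 2 ^ (n / 2) := by
  have h : IsStrongEventown k 𝒜 := fun S hS hne hSk => hstrong _ (card_pos.2 hne) hSk S hS rfl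
  obtain ⟨S, hS𝒜, hScard, hodd⟩ := hnot
  obtain ⟨B₀, t, -, rfl, htk⟩ := card_eq_succ.1 hScard
  obtain ⟨hB₀, ht⟩ := insert_subset_iff.1 hS𝒜
  simpa using h.card_mul_two_pow_le hk ht htk hB₀ hodd
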